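/- Suppose Q : ℝⁿ → Matrix (Fin m) (Fin m) ℝ is a conservative Q-matrix field with continuously differentiable entries, admitting a family of invariant distributions μ^x, uniformly exponentially ergodic with constants C₀, λ, and let F : ℝⁿ × Fin m → ℝⁿ satisfy the central condition, with x ↦ F(x,i) continuously differentiable for every i. Define F̂(x,i,t) := (P^x_t F(x,·))(i). Then there is a constant C > 0 such that for every coordinate k, all i, j ∈ Fin m, all t ≥ 0 and all x: |∂_{x_k} F̂(x,i,t) − ∂_{x_k} F̂(x,j,t)| ≤ C · ( ‖F(x,·)‖_∞ · ‖∂_{x_k}Q(x)‖_ℓ + ‖∂_x F(x,·)‖_∞ ) · e^{−λ t} · max(1, t). -/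

import Mathlib

open MeasureTheory

noncomputable section

/-- ℓ-norm of a matrix: `‖M‖_ℓ = max_i Σⱼ |M i j|`. -/
def lnorm {m : ℕ} (M : Matrix (Fin m) (Fin m) ℝ) : ℝ := ⨆ i, ∑ j, |M i j|

/-- Entrywise partial derivative `∂_{x_k} Q(x)`. -/
def matPartialDeriv {n m : ℕ} (Q : EuclideanSpace ℝ (Fin n) → Matrix (Fin m) (Fin m) ℝ)
    (k : Fin n) (x : EuclideanSpace ℝ (Fin n)) : Matrix (Fin m) (Fin m) ℝ :=
  Matrix.of fun i j => fderiv ℝ (fun y => Q y i j) x (EuclideanSpace.single k 1)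

/-- `F̂(x,i,t) := (P^x_t F(x,·))(i)`, the semigroup applied componentwise to `F(x,·)`. -/
def Fhat {n m : ℕ} (Q : EuclideanSpace ℝ (Fin n) → Matrix (Fin m) (Fin m) ℝ)
    (F : EuclideanSpace ℝ (Fin n) → Fin m → EuclideanSpace ℝ (Fin n))
    (x : EuclideanSpace ℝ (Fin n)) (i : Fin m) (t : ℝ) : EuclideanSpace ℝ (Fin n) :=
  WithLp.toLp 2 (fun l => (NormedSpace.exp (t • Q x)).mulVec (fun j => F x j l) i)

/-!
Write `F̂(x,·,t) = P^x_t F(x,·)`. Differentiating in `x_k` gives `P_t ∂_k F` plus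
`D exp(tQ)[t ∂_k Q] F`. Rows of `P_t` differ by at most `2 C₀ e^{-λt}` in `ℓ¹`, which handles the
first term. For the second, Duhamel's formula `D exp(A)[H] = ∫₀¹ e^{sA} H e^{(1-s)A} ds` turns it
into an average of `P_{st} (t ∂_k Q) P_{(1-s)t} F`: the row difference of `P_{st}` contributes
`e^{-λst}`, and since `F` is centred, `P_{(1-s)t} F = (P_{(1-s)t} - μ) F` contributes
`e^{-λ(1-s)t}`. The product is `e^{-λt}` for every `s`; the prefactor `t` is where `max 1 t` comes
from.
-/

open NormedSpace Filter Topology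

lemma norm_sum_smul_le_of_norm_le {κ E : Type*} [Fintype κ] [NormedAddCommGroup E]
    [NormedSpace ℝ E] (c : κ → ℝ) {v : κ → E} {K : ℝ} (hv : ∀ j, ‖v j‖ ≤ K) :
    ‖∑ j, c j • v j‖ ≤ (∑ j, |c j|) * K := by
  rw [Finset.sum_mul]
  refine (norm_sum_le _ _).trans (Finset.sum_le_sum fun j _ => ?_)
  rw [norm_smul, Real.norm_eq_abs]
  exact mul_le_mul_of_nonneg_left (hv j) (abs_nonneg _)

lemma sum_abs_sub_le_of_sum_abs_sub_le {κ : Type*} [Fintype κ] {p q μ : κ → ℝ} {ε : ℝ}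
    (hp : ∑ j, |p j - μ j| ≤ ε) (hq : ∑ j, |q j - μ j| ≤ ε) :
    ∑ j, |p j - q j| ≤ 2 * ε := by
  calc ∑ j, |p j - q j| ≤ ∑ j, (|p j - μ j| + |q j - μ j|) :=
        Finset.sum_le_sum fun j _ => (abs_sub_le _ (μ j) _).trans_eq (by rw [abs_sub_comm (μ j)])
    _ ≤ 2 * ε := by rw [Finset.sum_add_distrib]; linarith

namespace Matrix

section Semiring

variable {ι κ R E : Type*} [Fintype κ] [AddCommMonoid E]

def actVec [Semiring R] [Module R E] (M : Matrix ι κ R) (f : κ → E) (i : ι) : E :=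
  ∑ j, M i j • f j

lemma actVec_mul [Fintype ι] [Semiring R] [Module R E] {ν : Type*} (M : Matrix ν ι R)
    (N : Matrix ι κ R) (f : κ → E) :
    actVec (M * N) f = actVec M (actVec N f) := by
  ext i
  simp only [actVec, mul_apply, Finset.sum_smul, Finset.smul_sum, mul_smul]
  exact Finset.sum_comm

def actVecLinearMap [CommSemiring R] [Module R E] (f : κ → E) (i : ι) :
    Matrix ι κ R →ₗ[R] E where
  toFun M := actVec M f i
  map_add' M N := by simp only [actVec, add_apply, add_smul, Finset.sum_add_distrib]
  map_smul' c M := by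
    simp only [actVec, smul_apply, smul_eq_mul, mul_smul, Finset.smul_sum, RingHom.id_apply]

end Semiring

variable {ι κ E : Type*} [Fintype κ] [NormedAddCommGroup E] [NormedSpace ℝ E]

lemma norm_actVec_le (M : Matrix ι κ ℝ) {f : κ → E} {K : ℝ} (hf : ∀ j, ‖f j‖ ≤ K) (i : ι) :
    ‖actVec M f i‖ ≤ (∑ j, |M i j|) * K :=
  norm_sum_smul_le_of_norm_le _ hf

lemma actVec_sub_actVec (M : Matrix ι κ ℝ) (f : κ → E) (i i' : ι) :
    actVec M f i - actVec M f i' = ∑ j, (M i j - M i' j) • f j := by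
  simp only [actVec, sub_smul, Finset.sum_sub_distrib]

lemma norm_actVec_sub_actVec_le (M : Matrix ι κ ℝ) {f : κ → E} {K : ℝ} (hf : ∀ j, ‖f j‖ ≤ K)
    (i i' : ι) :
    ‖actVec M f i - actVec M f i'‖ ≤ (∑ j, |M i j - M i' j|) * K := by
  rw [actVec_sub_actVec]
  exact norm_sum_smul_le_of_norm_le _ hf

lemma actVec_eq_of_sum_smul_eq_zero (M : Matrix ι κ ℝ) {f : κ → E} {μ : κ → ℝ}
    (hμ : ∑ j, μ j • f j = 0) (i : ι) :
    actVec M f i = ∑ j, (M i j - μ j) • f j := by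
  simp only [actVec, sub_smul, Finset.sum_sub_distrib, hμ, sub_zero]

end Matrix

lemma sq_mul_add_mul_le_mul_max_one {c a b : ℝ} (hc : 0 ≤ c) (t : ℝ) (ha : 0 ≤ a) (hb : 0 ≤ b) :
    2 * c ^ 2 * t * a + 2 * c * b ≤ 2 * c * (c + 1) * (a + b) * max 1 t := by
  have hM1 : 1 ≤ max 1 t := le_max_left 1 t
  have hM0 : 0 ≤ max 1 t := zero_le_one.trans hM1
  nlinarith [mul_le_mul_of_nonneg_left (le_max_right 1 t) (by positivity : 0 ≤ c ^ 2 * a),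
    mul_nonneg (mul_nonneg hc ha) hM0, mul_nonneg (mul_nonneg (sq_nonneg c) hb) hM0,
    mul_nonneg (mul_nonneg hc hb) (sub_nonneg.2 hM1)]

section Lnorm

variable {m : ℕ}

lemma sum_abs_le_lnorm (M : Matrix (Fin m) (Fin m) ℝ) (i : Fin m) : ∑ j, |M i j| ≤ lnorm M :=
  le_ciSup (f := fun i => ∑ j, |M i j|) (Set.finite_range _).bddAbove i

lemma lnorm_nonneg (M : Matrix (Fin m) (Fin m) ℝ) : 0 ≤ lnorm M :=
  Real.iSup_nonneg fun _ => Finset.sum_nonneg fun _ _ => abs_nonneg _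

lemma lnorm_smul (c : ℝ) (M : Matrix (Fin m) (Fin m) ℝ) : lnorm (c • M) = |c| * lnorm M := by
  simp only [lnorm, Real.mul_iSup_of_nonneg (abs_nonneg c), Finset.mul_sum, Matrix.smul_apply,
    smul_eq_mul, abs_mul]

end Lnorm

namespace NormedSpace

variable {𝔸 : Type*} [NormedRing 𝔸] [NormedAlgebra ℝ 𝔸] [CompleteSpace 𝔸]

/- Mathlib's `exp_continuous` needs a `NormedAlgebra ℚ 𝔸` instance, which is not inferred from
the real one. -/
@[fun_prop]
lemma exp_continuous_of_real : Continuous (exp : 𝔸 → 𝔸) :=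
  continuous_iff_continuousAt.2 fun A => (exp_analytic (𝕂 := ℝ) A).continuousAt

theorem exp_sub_exp_eq_intervalIntegral (A B : 𝔸) :
    exp A - exp B = ∫ s in (0 : ℝ)..1, exp (s • A) * (A - B) * exp ((1 - s) • B) := by
  have hderiv (s : ℝ) : HasDerivAt (fun u : ℝ => exp (u • A) * exp ((1 - u) • B))
      (exp (s • A) * (A - B) * exp ((1 - s) • B)) s := by
    have hA := hasDerivAt_exp_smul_const' (𝕂 := ℝ) A s
    have hB := (hasDerivAt_exp_smul_const' (𝕂 := ℝ) B (1 - s)).scomp s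
      ((hasDerivAt_id s).const_sub 1)
    refine (hA.mul hB).congr_deriv ?_
    rw [← ((Commute.refl A).smul_left s).exp_left.eq]
    simp only [Function.comp_apply, neg_smul, one_smul, mul_neg, mul_sub, sub_mul, mul_assoc]
    abel
  rw [intervalIntegral.integral_eq_sub_of_hasDerivAt (fun s _ => hderiv s)
    ((by fun_prop : Continuous _).intervalIntegrable 0 1)]
  simp

theorem hasDerivAt_exp_add_smul (A H : 𝔸) :
    HasDerivAt (fun r : ℝ => exp (A + r • H))
      (∫ s in (0 : ℝ)..1, exp (s • A) * H * exp ((1 - s) • A)) 0 := by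
  set Φ : ℝ → 𝔸 := fun r => ∫ s in (0 : ℝ)..1, exp (s • (A + r • H)) * H * exp ((1 - s) • A)
  have hΦ : Continuous Φ :=
    intervalIntegral.continuous_parametric_intervalIntegral_of_continuous' (by fun_prop) 0 1
  have hslope : slope (fun r : ℝ => exp (A + r • H)) 0 =ᶠ[𝓝[≠] 0] Φ := by
    filter_upwards [self_mem_nhdsWithin] with r (hr : r ≠ 0)
    rw [slope_def_module, exp_sub_exp_eq_intervalIntegral]
    simp only [zero_smul, add_zero, sub_zero, add_sub_cancel_left, Φ, mul_smul_comm,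
      smul_mul_assoc, intervalIntegral.integral_smul, smul_smul, inv_mul_cancel₀ hr, one_smul]
  rw [hasDerivAt_iff_tendsto_slope, tendsto_congr' hslope]
  simpa [Φ] using (hΦ.tendsto 0).mono_left nhdsWithin_le_nhds

theorem fderiv_exp_apply (A H : 𝔸) :
    fderiv ℝ exp A H = ∫ s in (0 : ℝ)..1, exp (s • A) * H * exp ((1 - s) • A) := by
  have hline : HasDerivAt (fun r : ℝ => A + r • H) H 0 := by
    simpa using ((hasDerivAt_id (0 : ℝ)).smul_const H).const_add A
  have hexp := (exp_analytic (𝕂 := ℝ) (A + (0 : ℝ) • H)).differentiableAt.hasFDerivAt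
  simpa using (hasDerivAt_exp_add_smul A H).unique (hexp.comp_hasDerivAt 0 hline) |>.symm

end NormedSpace

attribute [local instance] Matrix.linftyOpNormedRing Matrix.linftyOpNormedAlgebra

namespace Matrix

variable {ι E E' : Type*} [Fintype ι] [DecidableEq ι] [NormedAddCommGroup E] [NormedSpace ℝ E]
  [NormedAddCommGroup E'] [NormedSpace ℝ E'] {Q : E' → Matrix ι ι ℝ} {x : E'}

/- `exp` on matrices is elaborated with the product topology rather than the one induced by the
operator norm; restating the lemma here lets `rw` match it. -/
lemma fderiv_exp_apply (A H : Matrix ι ι ℝ) :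
    fderiv ℝ exp A H = ∫ s in (0 : ℝ)..1, exp (s • A) * H * exp ((1 - s) • A) :=
  NormedSpace.fderiv_exp_apply A H

lemma differentiableAt_of_forall_apply (h : ∀ a b, DifferentiableAt ℝ (fun y => Q y a b) x) :
    DifferentiableAt ℝ Q x := by
  have hQ : Q = fun y => ∑ a, ∑ b, Q y a b • single a b (1 : ℝ) := by
    ext1 y
    simp only [smul_single, smul_eq_mul, mul_one]
    exact matrix_eq_sum_single _
  rw [hQ]
  exact .fun_sum fun a _ => .fun_sum fun b _ => (h a b).smul_const _

lemma fderiv_apply_apply (hQ : DifferentiableAt ℝ Q x) (v : E') (a b : ι) :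
    fderiv ℝ Q x v a b = fderiv ℝ (fun y => Q y a b) x v := by
  let L := (entryLinearMap ℝ ℝ a b).toContinuousLinearMap
  exact (DFunLike.congr_fun (L.hasFDerivAt.comp x hQ.hasFDerivAt).fderiv v).symm

lemma fderiv_actVec_apply {f : E' → ι → E} (hQ : DifferentiableAt ℝ Q x)
    (hf : ∀ b, DifferentiableAt ℝ (fun y => f y b) x) (v : E') (a : ι) :
    fderiv ℝ (fun y => actVec (Q y) (f y) a) x v
      = actVec (fderiv ℝ Q x v) (f x) a
        + actVec (Q x) (fun b => fderiv ℝ (fun y => f y b) x v) a := by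
  have hQab (b : ι) : DifferentiableAt ℝ (fun y => Q y a b) x :=
    (entryLinearMap ℝ ℝ a b).toContinuousLinearMap.differentiableAt.comp x hQ
  have hsum : HasFDerivAt (fun y => ∑ b, Q y a b • f y b)
      (∑ b, (Q x a b • fderiv ℝ (fun y => f y b) x
        + (fderiv ℝ (fun y => Q y a b) x).smulRight (f x b))) x :=
    HasFDerivAt.fun_sum fun b _ => (hQab b).hasFDerivAt.smul (hf b).hasFDerivAt
  simp only [actVec]
  rw [hsum.fderiv]
  simp only [_root_.sum_apply, _root_.add_apply, _root_.smul_apply,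
    ContinuousLinearMap.smulRight_apply, fderiv_apply_apply hQ, Finset.sum_add_distrib, add_comm]

end Matrix

def IsExpErgodic {ι : Type*} [Fintype ι] [DecidableEq ι] (G : Matrix ι ι ℝ) (μ : ι → ℝ)
    (C₀ lam : ℝ) : Prop :=
  ∀ i (t : ℝ), 0 ≤ t → ∑ j, |exp (t • G) i j - μ j| ≤ C₀ * Real.exp (-lam * t)

namespace IsExpErgodic

open Matrix

section

variable {ι E : Type*} [Fintype ι] [DecidableEq ι] [NormedAddCommGroup E] [NormedSpace ℝ E]
  {G : Matrix ι ι ℝ} {μ : ι → ℝ} {C₀ lam t K : ℝ} {f : ι → E}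

lemma norm_actVec_sub_le (hG : IsExpErgodic G μ C₀ lam) (ht : 0 ≤ t) (hf : ∀ j, ‖f j‖ ≤ K)
    (hK : 0 ≤ K) (i i' : ι) :
    ‖actVec (exp (t • G)) f i - actVec (exp (t • G)) f i'‖ ≤ 2 * C₀ * Real.exp (-lam * t) * K :=
  (norm_actVec_sub_actVec_le _ hf i i').trans <| mul_le_mul_of_nonneg_right
    ((sum_abs_sub_le_of_sum_abs_sub_le (hG i t ht) (hG i' t ht)).trans_eq (by ring)) hK

lemma norm_actVec_le_of_sum_smul_eq_zero (hG : IsExpErgodic G μ C₀ lam)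
    (hμ : ∑ j, μ j • f j = 0) (ht : 0 ≤ t) (hf : ∀ j, ‖f j‖ ≤ K) (hK : 0 ≤ K) (i : ι) :
    ‖actVec (exp (t • G)) f i‖ ≤ C₀ * Real.exp (-lam * t) * K := by
  rw [actVec_eq_of_sum_smul_eq_zero _ hμ]
  exact (norm_sum_smul_le_of_norm_le _ hf).trans (mul_le_mul_of_nonneg_right (hG i t ht) hK)

end

variable {m : ℕ} {E : Type*} [NormedAddCommGroup E] [NormedSpace ℝ E]
  {G : Matrix (Fin m) (Fin m) ℝ} {μ : Fin m → ℝ} {C₀ lam t K : ℝ} {f : Fin m → E}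

lemma norm_actVec_exp_mul_mul_exp_sub_le (hG : IsExpErgodic G μ C₀ lam) (hC₀ : 0 ≤ C₀)
    (hμ : ∑ j, μ j • f j = 0) {u v : ℝ} (hu : 0 ≤ u) (hv : 0 ≤ v) (H : Matrix (Fin m) (Fin m) ℝ)
    (hf : ∀ j, ‖f j‖ ≤ K) (hK : 0 ≤ K) (i i' : Fin m) :
    ‖actVec (exp (u • G) * H * exp (v • G)) f i - actVec (exp (u • G) * H * exp (v • G)) f i'‖
      ≤ 2 * C₀ ^ 2 * Real.exp (-lam * (u + v)) * lnorm H * K := by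
  rw [actVec_mul, actVec_mul]
  have hg := hG.norm_actVec_le_of_sum_smul_eq_zero hμ hv hf hK
  have hHg (c : Fin m) : ‖actVec H (actVec (exp (v • G)) f) c‖
      ≤ lnorm H * (C₀ * Real.exp (-lam * v) * K) :=
    (norm_actVec_le H hg c).trans
      (mul_le_mul_of_nonneg_right (sum_abs_le_lnorm H c) (by positivity))
  calc _ ≤ 2 * C₀ * Real.exp (-lam * u) * (lnorm H * (C₀ * Real.exp (-lam * v) * K)) :=
        hG.norm_actVec_sub_le hu hHg (by have := lnorm_nonneg H; positivity) i i'
    _ = _ := by rw [mul_add, Real.exp_add]; ring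

variable [CompleteSpace E]

lemma norm_actVec_fderiv_exp_sub_le (hG : IsExpErgodic G μ C₀ lam) (hC₀ : 0 ≤ C₀)
    (hμ : ∑ j, μ j • f j = 0) (ht : 0 ≤ t) (H : Matrix (Fin m) (Fin m) ℝ)
    (hf : ∀ j, ‖f j‖ ≤ K) (hK : 0 ≤ K) (i i' : Fin m) :
    ‖actVec (fderiv ℝ exp (t • G) (t • H)) f i - actVec (fderiv ℝ exp (t • G) (t • H)) f i'‖
      ≤ 2 * C₀ ^ 2 * t * Real.exp (-lam * t) * lnorm H * K := by
  let L := (actVecLinearMap (R := ℝ) f i - actVecLinearMap f i').toContinuousLinearMap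
  change ‖L (fderiv ℝ exp (t • G) (t • H))‖ ≤ _
  rw [Matrix.fderiv_exp_apply]
  set X : ℝ → Matrix (Fin m) (Fin m) ℝ :=
    fun s => exp (s • t • G) * (t • H) * exp ((1 - s) • t • G)
  have hL : ∫ s in (0 : ℝ)..1, L (X s) = L (∫ s in (0 : ℝ)..1, X s) :=
    L.intervalIntegral_comp_comm ((by fun_prop : Continuous X).intervalIntegrable 0 1)
  rw [← hL]
  have hpt : ∀ s ∈ Set.uIoc (0 : ℝ) 1,
      ‖L (X s)‖ ≤ 2 * C₀ ^ 2 * t * Real.exp (-lam * t) * lnorm H * K := by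
    intro s hs
    rw [Set.uIoc_of_le zero_le_one] at hs
    have := hG.norm_actVec_exp_mul_mul_exp_sub_le hC₀ hμ (mul_nonneg hs.1.le ht)
      (mul_nonneg (sub_nonneg.2 hs.2) ht) (t • H) hf hK i i'
    rw [lnorm_smul, abs_of_nonneg ht, ← add_mul, add_sub_cancel, one_mul] at this
    simp only [X, smul_smul]
    exact this.trans_eq (by ring)
  simpa using intervalIntegral.norm_integral_le_of_norm_le_const hpt

end IsExpErgodic

section Fhat

open Matrix

variable {n m : ℕ} {Q : EuclideanSpace ℝ (Fin n) → Matrix (Fin m) (Fin m) ℝ}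
  {F : EuclideanSpace ℝ (Fin n) → Fin m → EuclideanSpace ℝ (Fin n)} {x : EuclideanSpace ℝ (Fin n)}

lemma Fhat_eq_actVec (y : EuclideanSpace ℝ (Fin n)) (i : Fin m) (t : ℝ) :
    Fhat Q F y i t = actVec (exp (t • Q y)) (F y) i := by
  ext l
  simp [Fhat, actVec, mulVec, dotProduct]

lemma matPartialDeriv_eq_fderiv (hQ : DifferentiableAt ℝ Q x) (k : Fin n) :
    matPartialDeriv Q k x = fderiv ℝ Q x (EuclideanSpace.single k 1) := by
  ext a b
  exact (fderiv_apply_apply hQ _ a b).symm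

lemma fderiv_Fhat_apply (hQ : DifferentiableAt ℝ Q x)
    (hF : ∀ b, DifferentiableAt ℝ (fun y => F y b) x) (i : Fin m) (t : ℝ)
    (v : EuclideanSpace ℝ (Fin n)) :
    fderiv ℝ (fun y => Fhat Q F y i t) x v
      = actVec (fderiv ℝ exp (t • Q x) (t • fderiv ℝ Q x v)) (F x) i
        + actVec (exp (t • Q x)) (fun b => fderiv ℝ (fun y => F y b) x v) i := by
  have hexp : DifferentiableAt ℝ exp (t • Q x) := (exp_analytic (𝕂 := ℝ) _).differentiableAt
  have hP : HasFDerivAt (fun y => exp (t • Q y))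
      ((fderiv ℝ exp (t • Q x)).comp (t • fderiv ℝ Q x)) x :=
    hexp.hasFDerivAt.comp x (hQ.hasFDerivAt.const_smul t)
  simp only [Fhat_eq_actVec]
  rw [fderiv_actVec_apply hP.differentiableAt hF, hP.fderiv]
  rfl

end Fhat

theorem Fhat_partialDeriv_difference_bound_general {n m : ℕ} (C₀ lam : ℝ)
    (hC₀ : 0 < C₀)
    (Q : EuclideanSpace ℝ (Fin n) → Matrix (Fin m) (Fin m) ℝ)
    (μ : EuclideanSpace ℝ (Fin n) → Fin m → ℝ)
    (F : EuclideanSpace ℝ (Fin n) → Fin m → EuclideanSpace ℝ (Fin n))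
    (hQC1 : ∀ i j, ContDiff ℝ 1 fun x => Q x i j)
    (herg : ∀ x i (t : ℝ), 0 ≤ t →
      ∑ j, |NormedSpace.exp (t • Q x) i j - μ x j| ≤ C₀ * Real.exp (-lam * t))
    (hcentral : ∀ x, ∑ i, μ x i • F x i = 0)
    (hFC1 : ∀ i, ContDiff ℝ 1 fun x => F x i) :
    ∃ C > 0, ∀ (k : Fin n) (i j : Fin m) (t : ℝ), 0 ≤ t →
      ∀ x : EuclideanSpace ℝ (Fin n),
        ‖fderiv ℝ (fun y => Fhat Q F y i t) x (EuclideanSpace.single k 1)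
          - fderiv ℝ (fun y => Fhat Q F y j t) x (EuclideanSpace.single k 1)‖
          ≤ C * ((⨆ i', ‖F x i'‖) * lnorm (matPartialDeriv Q k x)
              + ⨆ i', ‖fderiv ℝ (fun y => F y i') x‖) * Real.exp (-lam * t) * max 1 t := by
  refine ⟨2 * C₀ * (C₀ + 1), by positivity, fun k i j t ht x => ?_⟩
  set e : EuclideanSpace ℝ (Fin n) := EuclideanSpace.single k 1
  have hQ : DifferentiableAt ℝ Q x :=
    Matrix.differentiableAt_of_forall_apply fun a b => (hQC1 a b).differentiable one_ne_zero x
  have hF (b : Fin m) : DifferentiableAt ℝ (fun y => F y b) x :=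
    (hFC1 b).differentiable one_ne_zero x
  set supF := ⨆ b, ‖F x b‖
  set supD := ⨆ b, ‖fderiv ℝ (fun y => F y b) x‖
  have hFb (b : Fin m) : ‖F x b‖ ≤ supF := le_ciSup (Finite.bddAbove_range (‖F x ·‖)) b
  have hDb (b : Fin m) : ‖fderiv ℝ (fun y => F y b) x e‖ ≤ supD := by
    simpa [e] using (fderiv ℝ (fun y => F y b) x).le_of_opNorm_le
      (le_ciSup (Finite.bddAbove_range (fun b => ‖fderiv ℝ (fun y => F y b) x‖)) b) e
  have hsupF : 0 ≤ supF := Real.iSup_nonneg fun _ => norm_nonneg _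
  have hsupD : 0 ≤ supD := Real.iSup_nonneg fun _ => norm_nonneg _
  have hlQ := lnorm_nonneg (fderiv ℝ Q x e)
  have hG : IsExpErgodic (Q x) (μ x) C₀ lam := herg x
  rw [fderiv_Fhat_apply hQ hF, fderiv_Fhat_apply hQ hF, add_sub_add_comm,
    matPartialDeriv_eq_fderiv hQ]
  refine (norm_add_le_of_le
    (hG.norm_actVec_fderiv_exp_sub_le hC₀.le (hcentral x) ht _ hFb hsupF i j)
    (hG.norm_actVec_sub_le ht hDb hsupD i j)).trans ?_
  linarith [sq_mul_add_mul_le_mul_max_one hC₀.le t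
    (by positivity : 0 ≤ Real.exp (-lam * t) * lnorm (fderiv ℝ Q x e) * supF)
    (by positivity : 0 ≤ Real.exp (-lam * t) * supD)]

/-- Decay of differences of `∂_{x_k} F̂(x,·,t)` in the starting state:
`|∂_{x_k}F̂(x,i,t) − ∂_{x_k}F̂(x,j,t)| ≤
  C(‖F(x,·)‖_∞‖∂_{x_k}Q(x)‖_ℓ + ‖∂_x F(x,·)‖_∞) e^{−λt} max(1,t)`. -/
theorem Fhat_partialDeriv_difference_bound {n m : ℕ} (C₀ lam : ℝ)
    (hC₀ : 0 < C₀) (hlam : 0 < lam)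
    (Q : EuclideanSpace ℝ (Fin n) → Matrix (Fin m) (Fin m) ℝ)
    (μ : EuclideanSpace ℝ (Fin n) → Fin m → ℝ)
    (F : EuclideanSpace ℝ (Fin n) → Fin m → EuclideanSpace ℝ (Fin n))
    (hQoff : ∀ x i j, i ≠ j → 0 ≤ Q x i j)
    (hQrow : ∀ x i, ∑ j, Q x i j = 0)
    (hQC1 : ∀ i j, ContDiff ℝ 1 fun x => Q x i j)
    (hμpos : ∀ x i, 0 < μ x i)
    (hμsum : ∀ x, ∑ i, μ x i = 1)
    (hμinv : ∀ x j, ∑ i, μ x i * Q x i j = 0)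
    (herg : ∀ x i (t : ℝ), 0 ≤ t →
      ∑ j, |NormedSpace.exp (t • Q x) i j - μ x j| ≤ C₀ * Real.exp (-lam * t))
    (hcentral : ∀ x, ∑ i, μ x i • F x i = 0)
    (hFC1 : ∀ i, ContDiff ℝ 1 fun x => F x i) :
    ∃ C > 0, ∀ (k : Fin n) (i j : Fin m) (t : ℝ), 0 ≤ t →
      ∀ x : EuclideanSpace ℝ (Fin n),
        ‖fderiv ℝ (fun y => Fhat Q F y i t) x (EuclideanSpace.single k 1)
          - fderiv ℝ (fun y => Fhat Q F y j t) x (EuclideanSpace.single k 1)‖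
          ≤ C * ((⨆ i', ‖F x i'‖) * lnorm (matPartialDeriv Q k x)
              + ⨆ i', ‖fderiv ℝ (fun y => F y i') x‖) * Real.exp (-lam * t) * max 1 t :=
  Fhat_partialDeriv_difference_bound_general C₀ lam hC₀ Q μ F hQC1 herg hcentral hFC1
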